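/- If C : {0,1}^n → ({0,1}^ℓ)^m is a (2, c, ε)-smooth code using b bits, then C is a (1, c, ε/2^b)-quantum smooth code using b bits: for each i ∈ [n] there exists a finitely supported probability distribution over tuples (j0, j1, S0, S1, (E0, E1)) satisfying the quantum-smooth-code conditions with parameters (1, c, ε/2^b); moreover it can be taken to use the same distribution over (j0, j1, S0, S1) as the classical decoder. -/

import Mathlib

open ComplexOrder Matrix

/-- A decoding tuple `(j0, j1, S0, S1, f)` for a 2-query decoder: two query positions,
two sets of answer bits, and an output function (taking the full `ℓ`-bit answers;
the requirement that it only depends on the bits in `S0`/`S1` is `DecTuple.Valid`). -/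
structure DecTuple (m ℓ : ℕ) where
  j0 : Fin m
  j1 : Fin m
  S0 : Finset (Fin ℓ)
  S1 : Finset (Fin ℓ)
  f : (Fin ℓ → Bool) → (Fin ℓ → Bool) → Bool
deriving DecidableEq

/-- Decoding tuples form a finite type. -/
def DecTuple.equivProd (m ℓ : ℕ) :
    (Fin m × Fin m × Finset (Fin ℓ) × Finset (Fin ℓ) ×
      ((Fin ℓ → Bool) → (Fin ℓ → Bool) → Bool)) ≃ DecTuple m ℓ where
  toFun p := ⟨p.1, p.2.1, p.2.2.1, p.2.2.2.1, p.2.2.2.2⟩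
  invFun ω := ⟨ω.j0, ω.j1, ω.S0, ω.S1, ω.f⟩
  left_inv _ := rfl
  right_inv _ := rfl

instance (m ℓ : ℕ) : Fintype (DecTuple m ℓ) :=
  Fintype.ofEquiv _ (DecTuple.equivProd m ℓ)

/-- A decoding tuple is valid for `b` used bits if the two queried positions are
distinct, the two sets have size `b`, and the output function depends only on the
answer bits in `S0` resp. `S1`. -/
def DecTuple.Valid {m ℓ : ℕ} (b : ℕ) (ω : DecTuple m ℓ) : Prop :=
  ω.j0 ≠ ω.j1 ∧ ω.S0.card = b ∧ ω.S1.card = b ∧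
    ∀ a0 a1 a0' a1' : Fin ℓ → Bool,
      (∀ k ∈ ω.S0, a0 k = a0' k) → (∀ k ∈ ω.S1, a1 k = a1' k) →
        ω.f a0 a1 = ω.f a0' a1'

/-- `D` is a distribution over decoding tuples witnessing that `C` is a
`(2, c, ε)`-smooth code using `b` bits at index `i`. -/
def IsSmoothDecoder {n m ℓ : ℕ} (b : ℕ) (c ε : ℝ)
    (C : (Fin n → Bool) → Fin m → Fin ℓ → Bool) (i : Fin n)
    (D : DecTuple m ℓ → ℝ) : Prop :=
  (∀ ω, 0 ≤ D ω) ∧ (∑ ω, D ω = 1) ∧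
  (∀ ω, D ω ≠ 0 → ω.Valid b) ∧
  (∀ x, 1 / 2 + ε ≤
    ∑ ω ∈ Finset.univ.filter
      (fun ω : DecTuple m ℓ => ω.f (C x ω.j0) (C x ω.j1) = x i), D ω) ∧
  (∀ j : Fin m,
    ∑ ω ∈ Finset.univ.filter
      (fun ω : DecTuple m ℓ => ω.j0 = j ∨ ω.j1 = j), D ω ≤ c / m)

/-- `C : {0,1}^n → ({0,1}^ℓ)^m` is a `(2, c, ε)`-smooth code using `b` bits. -/
def IsSmoothCode (n m ℓ b : ℕ) (c ε : ℝ)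
    (C : (Fin n → Bool) → Fin m → Fin ℓ → Bool) : Prop :=
  ∀ i : Fin n, ∃ D : DecTuple m ℓ → ℝ, IsSmoothDecoder b c ε C i D

/-- A quantum decoding tuple `(j0, j1, S0, S1)`: the two query positions and the two
sets of answer bits used. -/
structure QTuple (m ℓ : ℕ) where
  j0 : Fin m
  j1 : Fin m
  S0 : Finset (Fin ℓ)
  S1 : Finset (Fin ℓ)
deriving DecidableEq

/-- Quantum decoding tuples form a finite type. -/
def QTuple.equivProd (m ℓ : ℕ) :
    (Fin m × Fin m × Finset (Fin ℓ) × Finset (Fin ℓ)) ≃ QTuple m ℓ where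
  toFun p := ⟨p.1, p.2.1, p.2.2.1, p.2.2.2⟩
  invFun ω := ⟨ω.j0, ω.j1, ω.S0, ω.S1⟩
  left_inv _ := rfl
  right_inv _ := rfl

instance (m ℓ : ℕ) : Fintype (QTuple m ℓ) :=
  Fintype.ofEquiv _ (QTuple.equivProd m ℓ)

/-- `χ T a = (-1)^{T · a}`, the sign given by the inner product mod 2 of the
characteristic vector of `T` with the bit string `a`. -/
noncomputable def chi {ℓ : ℕ} (T : Finset (Fin ℓ)) (a : Fin ℓ → Bool) : ℂ :=
  (-1) ^ (T.filter fun k => a k = true).card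

/-- The state resulting from the quantum query
`Q = (1/√2)(|j0⟩ ⊗ 2^{-b/2} Σ_{T ⊆ S0} (-1)^{T·y_{j0}} |T⟩
          + |j1⟩ ⊗ 2^{-b/2} Σ_{T ⊆ S1} (-1)^{T·y_{j1}} |T⟩)`
to the string `y : ({0,1}^ℓ)^m`, as a vector in `ℂ^m ⊗ ℂ^{2^ℓ}` (indexed by the
standard basis `Fin m × Finset (Fin ℓ)`). -/
noncomputable def Qvec {m ℓ : ℕ} (b : ℕ) (j0 j1 : Fin m) (S0 S1 : Finset (Fin ℓ))
    (y : Fin m → Fin ℓ → Bool) : Fin m × Finset (Fin ℓ) → ℂ :=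
  fun p =>
    ((1 / (Real.sqrt 2 * Real.sqrt (2 ^ b)) : ℝ) : ℂ) *
      ((if p.1 = j0 ∧ p.2 ⊆ S0 then chi p.2 (y j0) else 0) +
       (if p.1 = j1 ∧ p.2 ⊆ S1 then chi p.2 (y j1) else 0))

/-- `D` (a distribution over quantum decoding tuples) together with the POVMs `E`
witnesses that `C` is a `(1, c, ε)`-quantum smooth code using `b` bits at index `i`. -/
def IsQSCDecoder {n m ℓ : ℕ} (b : ℕ) (c ε : ℝ)
    (C : (Fin n → Bool) → Fin m → Fin ℓ → Bool) (i : Fin n)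
    (D : QTuple m ℓ → ℝ)
    (E : QTuple m ℓ → Bool →
      Matrix (Fin m × Finset (Fin ℓ)) (Fin m × Finset (Fin ℓ)) ℂ) : Prop :=
  (∀ ω, 0 ≤ D ω) ∧ (∑ ω, D ω = 1) ∧
  (∀ ω, D ω ≠ 0 → ω.j0 ≠ ω.j1 ∧ ω.S0.card = b ∧ ω.S1.card = b ∧
    (E ω false).PosSemidef ∧ (E ω true).PosSemidef ∧ E ω false + E ω true = 1) ∧
  (∀ x, 1 / 2 + ε ≤
    ∑ ω, D ω *
      (star (Qvec b ω.j0 ω.j1 ω.S0 ω.S1 (C x)) ⬝ᵥ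
        (E ω (x i) *ᵥ Qvec b ω.j0 ω.j1 ω.S0 ω.S1 (C x))).re) ∧
  (∀ j : Fin m,
    ∑ ω ∈ Finset.univ.filter
      (fun ω : QTuple m ℓ => ω.j0 = j ∨ ω.j1 = j), D ω ≤ c / m)

/-- `C : {0,1}^n → ({0,1}^ℓ)^m` is a `(1, c, ε)`-quantum smooth code using `b` bits. -/
def IsQSC (n m ℓ b : ℕ) (c ε : ℝ)
    (C : (Fin n → Bool) → Fin m → Fin ℓ → Bool) : Prop :=
  ∀ i : Fin n, ∃ (D : QTuple m ℓ → ℝ)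
    (E : QTuple m ℓ → Bool →
      Matrix (Fin m × Finset (Fin ℓ)) (Fin m × Finset (Fin ℓ)) ℂ),
    IsQSCDecoder b c ε C i D E

/-- The underlying quantum decoding tuple of a classical decoding tuple
(forgetting the output function). -/
def DecTuple.toQ {m ℓ : ℕ} (ω : DecTuple m ℓ) : QTuple m ℓ :=
  ⟨ω.j0, ω.j1, ω.S0, ω.S1⟩

/-!
After a Hadamard transform on each block, the query state is `(|j0, a0⟩ + |j1, a1⟩)/√2`, where
`a0`, `a1` are the queried bits. If `F` is the `±1` matrix of the decoder's output function,
the observable `G = 2^{-b} (|j0⟩⟨j1| ⊗ F + |j1⟩⟨j0| ⊗ Fᵀ)` has expectation `2^{-b} F(a0, a1)`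
in that state, and `1 ± G` is positive semidefinite because it equals
`(1 - P0 - P1) + 2^{-2b} Σ_{A0, A1} |u_{A0} ± F w_{A1}⟩⟨u_{A0} ± F w_{A1}|`, where `u`, `w` are
the two Hadamard bases and `P0`, `P1` the projections onto the blocks. Measuring `(1 ± G)/2`
hence answers correctly with probability `(1 ± 2^{-b})/2` according to whether the classical
decoder does, which turns bias `ε` into bias `ε/2^b`. Classical tuples with the same
`(j0, j1, S0, S1)` are merged by averaging their POVMs.
-/

open Finset

section Characters

variable {ℓ : ℕ}

def bitsOf (A : Finset (Fin ℓ)) : Fin ℓ → Bool := fun k => decide (k ∈ A)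

lemma chi_eq_prod (T : Finset (Fin ℓ)) (a : Fin ℓ → Bool) :
    chi T a = ∏ k ∈ T, if a k then -1 else 1 := by
  rw [chi, prod_ite, prod_const, prod_const, one_pow, mul_one]

lemma star_chi (T : Finset (Fin ℓ)) (a : Fin ℓ → Bool) : star (chi T a) = chi T a := by
  simp [chi]

lemma sum_powerset_chi_mul_chi (S : Finset (Fin ℓ)) (a a' : Fin ℓ → Bool) :
    ∑ T ∈ S.powerset, chi T a * chi T a' =
      if ∀ k ∈ S, a k = a' k then 2 ^ #S else 0 := by
  simp_rw [chi_eq_prod, ← prod_mul_distrib, ← prod_one_add]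
  split_ifs with h
  · rw [← prod_const]
    refine prod_congr rfl fun k hk => ?_
    rw [h k hk]
    split_ifs <;> norm_num
  · push Not at h
    obtain ⟨k, hk, hne⟩ := h
    refine prod_eq_zero hk ?_
    cases ha : a k <;> cases ha' : a' k <;> simp_all

lemma chi_bitsOf_comm (T A : Finset (Fin ℓ)) : chi T (bitsOf A) = chi A (bitsOf T) := by
  simp only [chi, bitsOf, decide_eq_true_eq, filter_mem_eq_inter, inter_comm]

lemma bitsOf_eqOn_iff {A S : Finset (Fin ℓ)} (hA : A ⊆ S) (a : Fin ℓ → Bool) :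
    (∀ k ∈ S, bitsOf A k = a k) ↔ A = {k ∈ S | a k} := by
  constructor
  · intro h
    ext k
    by_cases hk : k ∈ S
    · simp [← h k hk, bitsOf, hk]
    · simpa [hk] using fun h => hk (hA h)
  · rintro rfl k hk
    simp [bitsOf, hk]

lemma sum_powerset_chi_bitsOf_mul_chi_bitsOf {S T T' : Finset (Fin ℓ)} (hT : T ⊆ S)
    (hT' : T' ⊆ S) :
    ∑ A ∈ S.powerset, chi T (bitsOf A) * chi T' (bitsOf A) =
      if T = T' then 2 ^ #S else 0 := by
  simp_rw [chi_bitsOf_comm T, chi_bitsOf_comm T', sum_powerset_chi_mul_chi]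
  have hfilter : {k ∈ S | bitsOf T' k} = T' := by
    simpa [bitsOf, filter_mem_eq_inter] using hT'
  exact if_congr ((bitsOf_eqOn_iff hT _).trans (by rw [hfilter])) rfl rfl

end Characters

noncomputable section BlockVectors

variable {m ℓ : ℕ}

/-- `|j⟩ ⊗ 2^{|S|/2} φ_{S,j}` with the answer `a` in place of `C(x)_j`: the unnormalised
Hadamard transform of `a` restricted to `S`, placed in block `j`. -/
def charVec (j : Fin m) (S : Finset (Fin ℓ)) (a : Fin ℓ → Bool) :
    Fin m × Finset (Fin ℓ) → ℂ :=
  fun p => if p.1 = j ∧ p.2 ⊆ S then chi p.2 a else 0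

def blockProj (j : Fin m) (S : Finset (Fin ℓ)) :
    Matrix (Fin m × Finset (Fin ℓ)) (Fin m × Finset (Fin ℓ)) ℂ :=
  diagonal fun p => if p.1 = j ∧ p.2 ⊆ S then 1 else 0

lemma star_charVec (j : Fin m) (S : Finset (Fin ℓ)) (a : Fin ℓ → Bool) :
    star (charVec j S a) = charVec j S a := by
  funext p
  simp only [Pi.star_apply, charVec, apply_ite star, star_chi, star_zero]

lemma sum_ite_block (j : Fin m) (S : Finset (Fin ℓ)) (g : Finset (Fin ℓ) → ℂ) :
    ∑ p : Fin m × Finset (Fin ℓ), (if p.1 = j ∧ p.2 ⊆ S then g p.2 else 0) =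
      ∑ T ∈ S.powerset, g T := by
  rw [Fintype.sum_prod_type_right]
  simp only [ite_and, sum_ite_eq', mem_univ, if_true, ← mem_powerset, sum_ite_mem, univ_inter]

lemma charVec_dotProduct_charVec (j : Fin m) (S : Finset (Fin ℓ)) (a a' : Fin ℓ → Bool) :
    charVec j S a ⬝ᵥ charVec j S a' = if ∀ k ∈ S, a k = a' k then 2 ^ #S else 0 := by
  simp only [dotProduct, charVec, ite_zero_mul_ite_zero, and_self]
  exact (sum_ite_block j S fun T => chi T a * chi T a').trans (sum_powerset_chi_mul_chi S a a')

lemma charVec_dotProduct_charVec_of_ne {j j' : Fin m} (h : j ≠ j') (S S' : Finset (Fin ℓ))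
    (a a' : Fin ℓ → Bool) : charVec j S a ⬝ᵥ charVec j' S' a' = 0 := by
  simp only [dotProduct, charVec, ite_zero_mul_ite_zero]
  exact sum_eq_zero fun p _ => if_neg fun hp => h (hp.1.1.symm.trans hp.2.1)

lemma charVec_dotProduct_charVec_bitsOf (j : Fin m) {S A : Finset (Fin ℓ)} (hA : A ⊆ S)
    (a : Fin ℓ → Bool) :
    charVec j S a ⬝ᵥ charVec j S (bitsOf A) = if A = {k ∈ S | a k} then 2 ^ #S else 0 := by
  rw [charVec_dotProduct_charVec]
  exact if_congr ((forall₂_congr fun _ _ => eq_comm).trans (bitsOf_eqOn_iff hA a)) rfl rfl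

lemma sum_vecMulVec_charVec_bitsOf (j : Fin m) (S : Finset (Fin ℓ)) :
    ∑ A ∈ S.powerset, vecMulVec (charVec j S (bitsOf A)) (charVec j S (bitsOf A)) =
      (2 : ℂ) ^ #S • blockProj j S := by
  ext p q
  simp only [Matrix.sum_apply, vecMulVec_apply, Matrix.smul_apply, blockProj, diagonal_apply,
    charVec, ite_zero_mul_ite_zero, smul_eq_mul]
  by_cases hpq : (p.1 = j ∧ p.2 ⊆ S) ∧ q.1 = j ∧ q.2 ⊆ S
  · simp only [if_pos hpq]
    rw [sum_powerset_chi_bitsOf_mul_chi_bitsOf hpq.1.2 hpq.2.2]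
    have hpq_eq : p = q ↔ p.2 = q.2 := ⟨congrArg Prod.snd, Prod.ext (hpq.1.1.trans hpq.2.1.symm)⟩
    simp only [hpq_eq, if_pos hpq.1]
    split_ifs <;> simp
  · simp only [if_neg hpq, sum_const_zero]
    split_ifs with hpq' hp
    · exact absurd ⟨hp, hpq' ▸ hp⟩ hpq
    all_goals simp

lemma posSemidef_one_sub_blockProj_sub_blockProj {j0 j1 : Fin m} (h : j0 ≠ j1)
    (S0 S1 : Finset (Fin ℓ)) : (1 - blockProj j0 S0 - blockProj j1 S1).PosSemidef := by
  rw [blockProj, blockProj, ← diagonal_one, diagonal_sub, diagonal_sub]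
  refine PosSemidef.diagonal fun p => ?_
  simp only [Pi.zero_apply]
  split_ifs with h0 h1
  · exact absurd (h0.1.symm.trans h1.1) h
  all_goals norm_num

end BlockVectors

section VecMulVec

variable {n R : Type*} [CommRing R]

lemma dotProduct_vecMulVec_mulVec [Fintype n] (x u v y : n → R) :
    x ⬝ᵥ (vecMulVec u v *ᵥ y) = (x ⬝ᵥ u) * (v ⬝ᵥ y) := by
  rw [vecMulVec_mulVec, op_smul_eq_smul, dotProduct_smul, smul_eq_mul, mul_comm]

lemma vecMulVec_add_smul_self (u w : n → R) {t : R} (ht : t * t = 1) :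
    vecMulVec (u + t • w) (u + t • w) =
      vecMulVec u u + vecMulVec w w + t • (vecMulVec u w + vecMulVec w u) := by
  ext i j
  simp only [vecMulVec_apply, Matrix.add_apply, Matrix.smul_apply, Pi.add_apply, Pi.smul_apply,
    smul_eq_mul]
  linear_combination (w i * w j) * ht

end VecMulVec

noncomputable section QueryState

variable {m ℓ : ℕ}

lemma Qvec_eq_smul (b : ℕ) (j0 j1 : Fin m) (S0 S1 : Finset (Fin ℓ))
    (y : Fin m → Fin ℓ → Bool) :
    Qvec b j0 j1 S0 S1 y =
      (((√2 * √(2 ^ b))⁻¹ : ℝ) : ℂ) • (charVec j0 S0 (y j0) + charVec j1 S1 (y j1)) := by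
  funext p
  simp [Qvec, charVec]

lemma Qvec_comm (b : ℕ) (j0 j1 : Fin m) (S0 S1 : Finset (Fin ℓ)) (y : Fin m → Fin ℓ → Bool) :
    Qvec b j0 j1 S0 S1 y = Qvec b j1 j0 S1 S0 y := by
  rw [Qvec_eq_smul, Qvec_eq_smul, add_comm]

lemma star_Qvec (b : ℕ) (j0 j1 : Fin m) (S0 S1 : Finset (Fin ℓ)) (y : Fin m → Fin ℓ → Bool) :
    star (Qvec b j0 j1 S0 S1 y) = Qvec b j0 j1 S0 S1 y := by
  rw [Qvec_eq_smul, star_smul, star_add, star_charVec, star_charVec, Complex.star_def,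
    Complex.conj_ofReal]

lemma Qvec_scale_mul_self (b : ℕ) :
    (((√2 * √(2 ^ b))⁻¹ : ℝ) : ℂ) * (((√2 * √(2 ^ b))⁻¹ : ℝ) : ℂ) = (2 * 2 ^ b)⁻¹ := by
  rw [← Complex.ofReal_mul, ← mul_inv, mul_mul_mul_comm, Real.mul_self_sqrt zero_le_two,
    Real.mul_self_sqrt (by positivity)]
  push_cast
  rfl

lemma Qvec_dotProduct_Qvec {b : ℕ} {j0 j1 : Fin m} (hj : j0 ≠ j1) {S0 S1 : Finset (Fin ℓ)}
    (h0 : #S0 = b) (h1 : #S1 = b) (y : Fin m → Fin ℓ → Bool) :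
    Qvec b j0 j1 S0 S1 y ⬝ᵥ Qvec b j0 j1 S0 S1 y = 1 := by
  rw [Qvec_eq_smul, smul_dotProduct, dotProduct_smul, add_dotProduct, dotProduct_add,
    dotProduct_add, charVec_dotProduct_charVec_of_ne hj, charVec_dotProduct_charVec_of_ne hj.symm,
    charVec_dotProduct_charVec, charVec_dotProduct_charVec, if_pos fun _ _ => rfl,
    if_pos fun _ _ => rfl, smul_eq_mul, smul_eq_mul, ← mul_assoc, Qvec_scale_mul_self, h0, h1]
  field_simp
  ring

lemma Qvec_dotProduct_charVec_bitsOf {b : ℕ} {j0 j1 : Fin m} (hj : j0 ≠ j1)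
    {S0 A : Finset (Fin ℓ)} (hA : A ⊆ S0) (S1 : Finset (Fin ℓ)) (y : Fin m → Fin ℓ → Bool) :
    Qvec b j0 j1 S0 S1 y ⬝ᵥ charVec j0 S0 (bitsOf A) =
      (((√2 * √(2 ^ b))⁻¹ : ℝ) : ℂ) * if A = {k ∈ S0 | y j0 k} then 2 ^ #S0 else 0 := by
  rw [Qvec_eq_smul, smul_dotProduct, add_dotProduct, charVec_dotProduct_charVec_bitsOf j0 hA,
    charVec_dotProduct_charVec_of_ne hj.symm, add_zero, smul_eq_mul]

end QueryState

noncomputable section Observable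

variable {m ℓ : ℕ}

def signOf (v : Bool) : ℂ := if v then 1 else -1

lemma signOf_mul_signOf (v w : Bool) : signOf v * signOf w = if w = v then 1 else -1 := by
  cases v <;> cases w <;> norm_num [signOf]

lemma star_signOf (v : Bool) : star (signOf v) = signOf v := by
  cases v <;> simp [signOf]

namespace DecTuple

/-- In the Hadamard bases of the two blocks this is `2^{-b} (|j0⟩⟨j1| ⊗ F + |j1⟩⟨j0| ⊗ Fᵀ)`,
where `F` is the `±1` matrix of `ω.f` on the bits in `S0 × S1`. -/
def observable (ω : DecTuple m ℓ) :
    Matrix (Fin m × Finset (Fin ℓ)) (Fin m × Finset (Fin ℓ)) ℂ :=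
  ((2 : ℂ) ^ (#ω.S0 + #ω.S1))⁻¹ • ∑ A0 ∈ ω.S0.powerset, ∑ A1 ∈ ω.S1.powerset,
    signOf (ω.f (bitsOf A0) (bitsOf A1)) •
      (vecMulVec (charVec ω.j0 ω.S0 (bitsOf A0)) (charVec ω.j1 ω.S1 (bitsOf A1)) +
        vecMulVec (charVec ω.j1 ω.S1 (bitsOf A1)) (charVec ω.j0 ω.S0 (bitsOf A0)))

lemma dotProduct_observable_mulVec (ω : DecTuple m ℓ) (x : Fin m × Finset (Fin ℓ) → ℂ) :
    x ⬝ᵥ (ω.observable *ᵥ x) =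
      ((2 : ℂ) ^ (#ω.S0 + #ω.S1))⁻¹ * ∑ A0 ∈ ω.S0.powerset, ∑ A1 ∈ ω.S1.powerset,
        signOf (ω.f (bitsOf A0) (bitsOf A1)) * (2 * ((x ⬝ᵥ charVec ω.j0 ω.S0 (bitsOf A0)) *
          (x ⬝ᵥ charVec ω.j1 ω.S1 (bitsOf A1)))) := by
  simp only [observable, Matrix.smul_mulVec, Matrix.sum_mulVec, Matrix.add_mulVec,
    dotProduct_smul, dotProduct_sum, dotProduct_add, dotProduct_vecMulVec_mulVec, smul_eq_mul]
  congr 1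
  refine sum_congr rfl fun A0 _ => sum_congr rfl fun A1 _ => ?_
  rw [dotProduct_comm (charVec _ _ _) x, dotProduct_comm (charVec _ _ _) x]
  ring

lemma Qvec_dotProduct_observable_mulVec {b : ℕ} {ω : DecTuple m ℓ} (hω : ω.Valid b)
    (y : Fin m → Fin ℓ → Bool) :
    Qvec b ω.j0 ω.j1 ω.S0 ω.S1 y ⬝ᵥ (ω.observable *ᵥ Qvec b ω.j0 ω.j1 ω.S0 ω.S1 y) =
      ((2 : ℂ) ^ b)⁻¹ * signOf (ω.f (y ω.j0) (y ω.j1)) := by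
  obtain ⟨hj, -, -, hf⟩ := hω
  set A0 : Finset (Fin ℓ) := {k ∈ ω.S0 | y ω.j0 k}
  set A1 : Finset (Fin ℓ) := {k ∈ ω.S1 | y ω.j1 k}
  have hfA : ω.f (bitsOf A0) (bitsOf A1) = ω.f (y ω.j0) (y ω.j1) :=
    hf _ _ _ _ ((bitsOf_eqOn_iff (filter_subset _ _) _).2 rfl)
      ((bitsOf_eqOn_iff (filter_subset _ _) _).2 rfl)
  have hQ0 : ∀ A ∈ ω.S0.powerset, Qvec b ω.j0 ω.j1 ω.S0 ω.S1 y ⬝ᵥ charVec ω.j0 ω.S0 (bitsOf A) =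
      (((√2 * √(2 ^ b))⁻¹ : ℝ) : ℂ) * if A = A0 then 2 ^ #ω.S0 else 0 := fun A hA =>
    Qvec_dotProduct_charVec_bitsOf hj (mem_powerset.1 hA) _ y
  have hQ1 : ∀ A ∈ ω.S1.powerset, Qvec b ω.j0 ω.j1 ω.S0 ω.S1 y ⬝ᵥ charVec ω.j1 ω.S1 (bitsOf A) =
      (((√2 * √(2 ^ b))⁻¹ : ℝ) : ℂ) * if A = A1 then 2 ^ #ω.S1 else 0 := fun A hA => by
    rw [Qvec_comm]
    exact Qvec_dotProduct_charVec_bitsOf hj.symm (mem_powerset.1 hA) _ y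
  rw [dotProduct_observable_mulVec, sum_congr rfl fun A h0 => sum_congr rfl fun A' h1 => by
    rw [hQ0 A h0, hQ1 A' h1]]
  have hA0 : A0 ∈ ω.S0.powerset := mem_powerset.2 (filter_subset _ _)
  have hA1 : A1 ∈ ω.S1.powerset := mem_powerset.2 (filter_subset _ _)
  simp only [mul_ite, ite_mul, mul_zero, zero_mul, sum_ite_eq', if_pos hA0, if_pos hA1, hfA]
  calc _ = (2 * (((√2 * √(2 ^ b))⁻¹ : ℝ) : ℂ) * (((√2 * √(2 ^ b))⁻¹ : ℝ) : ℂ)) *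
        ((2 : ℂ) ^ (#ω.S0 + #ω.S1))⁻¹ * 2 ^ (#ω.S0 + #ω.S1) *
          signOf (ω.f (y ω.j0) (y ω.j1)) := by ring
    _ = _ := by
      rw [mul_assoc 2, Qvec_scale_mul_self, inv_mul_cancel_right₀ (by positivity)]
      field_simp

lemma posSemidef_one_add_smul_observable {ω : DecTuple m ℓ} (hj : ω.j0 ≠ ω.j1) {s : ℂ}
    (hs : s * s = 1) (hs' : star s = s) : (1 + s • ω.observable).PosSemidef := by
  set K : ℂ := 2 ^ (#ω.S0 + #ω.S1)
  set u := fun A => charVec ω.j0 ω.S0 (bitsOf A)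
  set w := fun A => charVec ω.j1 ω.S1 (bitsOf A)
  set F := fun A0 A1 => signOf (ω.f (bitsOf A0) (bitsOf A1))
  have hsum0 : ∑ A0 ∈ ω.S0.powerset, ∑ _A1 ∈ ω.S1.powerset, vecMulVec (u A0) (u A0) =
      K • blockProj ω.j0 ω.S0 := by
    simp only [sum_const, card_powerset, ← smul_sum, u, sum_vecMulVec_charVec_bitsOf,
      ← Nat.cast_smul_eq_nsmul ℂ, smul_smul, K, pow_add]
    push_cast
    rw [mul_comm]
  have hsum1 : ∑ _A0 ∈ ω.S0.powerset, ∑ A1 ∈ ω.S1.powerset, vecMulVec (w A1) (w A1) =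
      K • blockProj ω.j1 ω.S1 := by
    simp only [w, sum_vecMulVec_charVec_bitsOf, sum_const, card_powerset,
      ← Nat.cast_smul_eq_nsmul ℂ, smul_smul, K, pow_add]
    norm_cast
  have hsquare : ∀ A0 A1, vecMulVec (u A0 + (s * F A0 A1) • w A1)
      (star (u A0 + (s * F A0 A1) • w A1)) =
        vecMulVec (u A0) (u A0) + vecMulVec (w A1) (w A1) +
          s • (F A0 A1 • (vecMulVec (u A0) (w A1) + vecMulVec (w A1) (u A0))) := by
    intro A0 A1
    have hF : F A0 A1 * F A0 A1 = 1 := by simp [F, signOf_mul_signOf]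
    rw [star_add, star_smul, star_mul', star_signOf, hs', star_charVec, star_charVec,
      vecMulVec_add_smul_self _ _ (by linear_combination F A0 A1 * F A0 A1 * hs + hF), smul_smul]
  have hdecomp : 1 + s • ω.observable =
      (1 - blockProj ω.j0 ω.S0 - blockProj ω.j1 ω.S1) +
        K⁻¹ • ∑ A0 ∈ ω.S0.powerset, ∑ A1 ∈ ω.S1.powerset,
          vecMulVec (u A0 + (s * F A0 A1) • w A1) (star (u A0 + (s * F A0 A1) • w A1)) := by
    have hK : K ≠ 0 := by positivity
    simp only [hsquare, sum_add_distrib, hsum0, hsum1, ← smul_sum]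
    rw [smul_add, smul_add, inv_smul_smul₀ hK, inv_smul_smul₀ hK, smul_comm K⁻¹ s, observable]
    abel
  have hK : (0 : ℂ) ≤ K⁻¹ := by positivity
  rw [hdecomp]
  exact (posSemidef_one_sub_blockProj_sub_blockProj hj _ _).add <|
    (posSemidef_sum _ fun A0 _ => posSemidef_sum _ fun A1 _ =>
      posSemidef_vecMulVec_self_star _).smul hK

end DecTuple

end Observable

noncomputable section Povm

variable {m ℓ : ℕ}

namespace DecTuple

def povm (ω : DecTuple m ℓ) (v : Bool) :
    Matrix (Fin m × Finset (Fin ℓ)) (Fin m × Finset (Fin ℓ)) ℂ :=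
  (2 : ℂ)⁻¹ • (1 + signOf v • ω.observable)

lemma povm_posSemidef {ω : DecTuple m ℓ} (hj : ω.j0 ≠ ω.j1) (v : Bool) :
    (ω.povm v).PosSemidef :=
  (posSemidef_one_add_smul_observable hj (by cases v <;> norm_num [signOf])
    (star_signOf v)).smul (by positivity)

lemma povm_false_add_povm_true (ω : DecTuple m ℓ) : ω.povm false + ω.povm true = 1 := by
  rw [povm, povm, ← smul_add, add_add_add_comm, ← add_smul, signOf, signOf,
    if_neg Bool.false_ne_true, if_pos rfl, neg_add_cancel, zero_smul, add_zero, ← two_smul ℂ,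
    smul_smul, inv_mul_cancel₀ two_ne_zero, one_smul]

lemma star_Qvec_dotProduct_povm_mulVec {b : ℕ} {ω : DecTuple m ℓ} (hω : ω.Valid b)
    (y : Fin m → Fin ℓ → Bool) (v : Bool) :
    star (Qvec b ω.j0 ω.j1 ω.S0 ω.S1 y) ⬝ᵥ (ω.povm v *ᵥ Qvec b ω.j0 ω.j1 ω.S0 ω.S1 y) =
      (((1 + (if ω.f (y ω.j0) (y ω.j1) = v then 1 else -1) / 2 ^ b) / 2 : ℝ) : ℂ) := by
  rw [star_Qvec, povm, Matrix.smul_mulVec, Matrix.add_mulVec, Matrix.one_mulVec,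
    Matrix.smul_mulVec, dotProduct_smul, dotProduct_add, dotProduct_smul,
    Qvec_dotProduct_Qvec hω.1 hω.2.1 hω.2.2.1, Qvec_dotProduct_observable_mulVec hω,
    smul_eq_mul, smul_eq_mul, mul_left_comm, signOf_mul_signOf]
  split_ifs <;> push_cast <;> ring

end DecTuple

end Povm

noncomputable section InducedDecoder

variable {m ℓ : ℕ}

def inducedDist (D : DecTuple m ℓ → ℝ) (ω' : QTuple m ℓ) : ℝ :=
  ∑ ω ∈ univ.filter (fun ω : DecTuple m ℓ => ω.toQ = ω'), D ω

/-- When `inducedDist D ω' = 0` the division makes this `0`; such `ω'` carry no POVM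
condition. -/
def inducedPovm (D : DecTuple m ℓ → ℝ) (ω' : QTuple m ℓ) (v : Bool) :
    Matrix (Fin m × Finset (Fin ℓ)) (Fin m × Finset (Fin ℓ)) ℂ :=
  ∑ ω ∈ univ.filter (fun ω : DecTuple m ℓ => ω.toQ = ω'),
    ((D ω / inducedDist D ω' : ℝ) : ℂ) • ω.povm v

variable {D : DecTuple m ℓ → ℝ}

lemma inducedDist_nonneg (hD : ∀ ω, 0 ≤ D ω) (ω' : QTuple m ℓ) : 0 ≤ inducedDist D ω' :=
  sum_nonneg fun ω _ => hD ω

lemma sum_filter_inducedDist (D : DecTuple m ℓ → ℝ) (p : QTuple m ℓ → Prop) [DecidablePred p] :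
    ∑ ω' ∈ univ.filter p, inducedDist D ω' = ∑ ω ∈ univ.filter (fun ω => p ω.toQ), D ω := by
  simp only [inducedDist, sum_fiberwise_eq_sum_filter, mem_filter, mem_univ, true_and]

lemma sum_inducedDist (D : DecTuple m ℓ → ℝ) : ∑ ω', inducedDist D ω' = ∑ ω, D ω :=
  sum_fiberwise _ _ _

lemma inducedPovm_posSemidef (hD : ∀ ω, 0 ≤ D ω) {ω' : QTuple m ℓ} (hj : ω'.j0 ≠ ω'.j1)
    (v : Bool) : (inducedPovm D ω' v).PosSemidef :=
  posSemidef_sum _ fun ω hω => by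
    obtain rfl := (mem_filter.1 hω).2
    exact (DecTuple.povm_posSemidef hj v).smul
      (Complex.zero_le_real.2 (div_nonneg (hD ω) (inducedDist_nonneg hD _)))

lemma inducedPovm_false_add_inducedPovm_true {ω' : QTuple m ℓ} (h : inducedDist D ω' ≠ 0) :
    inducedPovm D ω' false + inducedPovm D ω' true = 1 := by
  simp only [inducedPovm, ← sum_add_distrib, ← smul_add, DecTuple.povm_false_add_povm_true,
    ← sum_smul, ← Complex.ofReal_sum, ← sum_div]
  rw [← inducedDist, div_self h, Complex.ofReal_one, one_smul]

lemma inducedDist_mul_re_dotProduct_inducedPovm (hD : ∀ ω, 0 ≤ D ω) (b : ℕ)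
    (ω' : QTuple m ℓ) (y : Fin m → Fin ℓ → Bool) (v : Bool) :
    inducedDist D ω' *
        (star (Qvec b ω'.j0 ω'.j1 ω'.S0 ω'.S1 y) ⬝ᵥ
          (inducedPovm D ω' v *ᵥ Qvec b ω'.j0 ω'.j1 ω'.S0 ω'.S1 y)).re =
      ∑ ω ∈ univ.filter (fun ω : DecTuple m ℓ => ω.toQ = ω'),
        D ω * (star (Qvec b ω.j0 ω.j1 ω.S0 ω.S1 y) ⬝ᵥ
          (ω.povm v *ᵥ Qvec b ω.j0 ω.j1 ω.S0 ω.S1 y)).re := by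
  by_cases h : inducedDist D ω' = 0
  · have hzero := (sum_eq_zero_iff_of_nonneg fun ω _ => hD ω).1 h
    rw [h, zero_mul]
    exact (sum_eq_zero fun ω hω => by rw [hzero ω hω, zero_mul]).symm
  · rw [inducedPovm, Matrix.sum_mulVec, dotProduct_sum, Complex.re_sum, mul_sum]
    refine sum_congr rfl fun ω hω => ?_
    obtain rfl := (mem_filter.1 hω).2
    rw [Matrix.smul_mulVec, dotProduct_smul, smul_eq_mul, Complex.re_ofReal_mul, ← mul_assoc,
      mul_div_cancel₀ _ h]
    rfl

end InducedDecoder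

namespace IsSmoothDecoder

variable {n m ℓ b : ℕ} {c ε : ℝ} {C : (Fin n → Bool) → Fin m → Fin ℓ → Bool} {i : Fin n}
  {D : DecTuple m ℓ → ℝ}

lemma le_sum_inducedDist_mul_re (hD : IsSmoothDecoder b c ε C i D) (x : Fin n → Bool) :
    1 / 2 + ε / 2 ^ b ≤
      ∑ ω' : QTuple m ℓ, inducedDist D ω' *
        (star (Qvec b ω'.j0 ω'.j1 ω'.S0 ω'.S1 (C x)) ⬝ᵥ
          (inducedPovm D ω' (x i) *ᵥ Qvec b ω'.j0 ω'.j1 ω'.S0 ω'.S1 (C x))).re := by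
  obtain ⟨hD0, hD1, hvalid, hcorrect, -⟩ := hD
  set correct := fun ω : DecTuple m ℓ => ω.f (C x ω.j0) (C x ω.j1) = x i
  set p := ∑ ω ∈ univ.filter correct, D ω
  set q := ∑ ω ∈ univ.filter (fun ω => ¬ correct ω), D ω
  have hpq : p + q = 1 := (sum_filter_add_sum_filter_not _ _ _).trans hD1
  have hsum : ∑ ω' : QTuple m ℓ, inducedDist D ω' *
        (star (Qvec b ω'.j0 ω'.j1 ω'.S0 ω'.S1 (C x)) ⬝ᵥ
          (inducedPovm D ω' (x i) *ᵥ Qvec b ω'.j0 ω'.j1 ω'.S0 ω'.S1 (C x))).re =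
      ∑ ω, D ω * ((1 + (if correct ω then 1 else -1) / 2 ^ b) / 2) := by
    simp only [inducedDist_mul_re_dotProduct_inducedPovm hD0, sum_fiberwise]
    refine sum_congr rfl fun ω _ => ?_
    by_cases hω : D ω = 0
    · rw [hω, zero_mul, zero_mul]
    · rw [DecTuple.star_Qvec_dotProduct_povm_mulVec (hvalid ω hω), Complex.ofReal_re]
  have hsplit : ∑ ω, D ω * ((1 + (if correct ω then 1 else -1) / 2 ^ b) / 2) =
      p * ((1 + 1 / 2 ^ b) / 2) + q * ((1 + -1 / 2 ^ b) / 2) := by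
    rw [← sum_filter_add_sum_filter_not _ correct, sum_mul, sum_mul]
    congr 1 <;> refine sum_congr rfl fun ω hω => ?_
    · rw [if_pos (mem_filter.1 hω).2]
    · rw [if_neg (mem_filter.1 hω).2]
  rw [hsum, hsplit]
  calc 1 / 2 + ε / 2 ^ b ≤ 1 / 2 + (p - q) / 2 / 2 ^ b := by
        gcongr
        linarith [hcorrect x]
    _ = _ := by linear_combination (-1 / 2 : ℝ) * hpq

lemma isQSCDecoder_inducedDist (hD : IsSmoothDecoder b c ε C i D) :
    IsQSCDecoder b c (ε / 2 ^ b) C i (inducedDist D) (inducedPovm D) := by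
  have hsuccess := hD.le_sum_inducedDist_mul_re
  obtain ⟨hD0, hD1, hvalid, -, hsmooth⟩ := hD
  refine ⟨inducedDist_nonneg hD0, (sum_inducedDist D).trans hD1, fun ω' hω' => ?_, hsuccess,
    fun j => ?_⟩
  · obtain ⟨ω, hω, hDω⟩ := exists_ne_zero_of_sum_ne_zero hω'
    obtain rfl := (mem_filter.1 hω).2
    obtain ⟨hj, h0, h1, -⟩ := hvalid ω hDω
    exact ⟨hj, h0, h1, inducedPovm_posSemidef hD0 hj false, inducedPovm_posSemidef hD0 hj true,
      inducedPovm_false_add_inducedPovm_true hω'⟩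
  · rw [sum_filter_inducedDist]
    exact hsmooth j

end IsSmoothDecoder

/-- a `(2, c, ε)`-smooth code using `b` bits is a `(1, c, ε/2^b)`-quantum
smooth code using `b` bits; moreover, for every index `i` and every classical smooth
decoder `D` there is a quantum decoder whose distribution over `(j0, j1, S0, S1)` is
exactly the one induced by `D`. -/
theorem stmt7 (n m ℓ b : ℕ) (c ε : ℝ)
    (C : (Fin n → Bool) → Fin m → Fin ℓ → Bool)
    (h : IsSmoothCode n m ℓ b c ε C) :
    IsQSC n m ℓ b c (ε / 2 ^ b) C ∧
    ∀ (i : Fin n) (D : DecTuple m ℓ → ℝ), IsSmoothDecoder b c ε C i D →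
      ∃ E : QTuple m ℓ → Bool →
          Matrix (Fin m × Finset (Fin ℓ)) (Fin m × Finset (Fin ℓ)) ℂ,
        IsQSCDecoder b c (ε / 2 ^ b) C i
          (fun ω' => ∑ ω ∈ Finset.univ.filter
            (fun ω : DecTuple m ℓ => ω.toQ = ω'), D ω) E := by
  refine ⟨fun i => ?_, fun i D hD => ⟨_, hD.isQSCDecoder_inducedDist⟩⟩
  obtain ⟨D, hD⟩ := h i
  exact ⟨_, _, hD.isQSCDecoder_inducedDist⟩
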